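/- arXiv:2210.08461 — 7 statements merged into one kernel-verified Lean document; each statement's English description precedes it below -/
import Mathlib

section
/- Let a, b be nonnegative real numbers with a + b > 0. Then the function f : ℝ → ℝ given by f(v) = a·(1−v)² + b·(1+v)² attains its minimum over ℝ, and its minimum value equals 4ab/(a+b); equivalently, writing q = a/(a+b), the minimum value equals 2(a+b)·(2q(1−q)), i.e. 2(a+b) times the Gini impurity 2q(1−q). (Theorem 1(a): the minimum partial empirical risk of a constant prediction under the quadratic loss equals 2|S|w·G(S).) -/
/-- Theorem 1(a): the quadratic-loss objective `f v = a*(1-v)^2 + b*(1+v)^2`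
attains its minimum over ℝ, with minimum value `4ab/(a+b)`, which equals
`2(a+b)` times the Gini impurity `2q(1-q)` where `q = a/(a+b)`. -/
theorem quad_loss_min_eq_gini (a b : ℝ) (ha : 0 ≤ a) (hb : 0 ≤ b) (hab : 0 < a + b) :
    ∃ v : ℝ, (∀ u : ℝ, a * (1 - v) ^ 2 + b * (1 + v) ^ 2 ≤ a * (1 - u) ^ 2 + b * (1 + u) ^ 2) ∧
      a * (1 - v) ^ 2 + b * (1 + v) ^ 2 = 4 * a * b / (a + b) ∧
      a * (1 - v) ^ 2 + b * (1 + v) ^ 2 =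
        2 * (a + b) * (2 * (a / (a + b)) * (1 - a / (a + b))) := by
  have hne : a + b ≠ 0 := ne_of_gt hab
  refine ⟨(a - b) / (a + b), ?_, ?_, ?_⟩
  · intro u
    have h : a * (1 - (a - b) / (a + b)) ^ 2 + b * (1 + (a - b) / (a + b)) ^ 2
        = 4 * a * b / (a + b) := by field_simp; ring
    rw [h]
    rw [div_le_iff₀ hab]
    nlinarith [sq_nonneg (a * (1 - u) - b * (1 + u)), mul_nonneg ha (sq_nonneg (1 - u)),
      mul_nonneg hb (sq_nonneg (1 + u)), sq_nonneg u]
  · field_simp; ring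
  · field_simp; ring
end

section
/- Let w > 0 be a real number, let n₁, n₂ be positive integers and p₁, p₂ integers with 0 ≤ p₁ ≤ n₁ and 0 ≤ p₂ ≤ n₂; set n = n₁ + n₂ and p = p₁ + p₂. Define M(m,k) = min over v ∈ ℝ of [k·w·(1−v)² + (m−k)·w·(1+v)²] for any positive integer m and integer 0 ≤ k ≤ m, and define the Gini impurity G(m,k) = 2·(k/m)·(1 − k/m). Then M(n,p) − M(n₁,p₁) − M(n₂,p₂) = 2·n·w·( G(n,p) − (n₁/n)·G(n₁,p₁) − (n₂/n)·G(n₂,p₂) ). (Theorem 1(a) consequence: the quadratic-loss risk reduction of a split equals 2|S|w times the Gini impurity reduction.) -/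
/-- Minimum partial empirical risk of a constant prediction under the quadratic loss,
on a set of `m` examples with `k` positives, each of weight `w`. -/
noncomputable def quadMinRisk (w m k : ℝ) : ℝ :=
  sInf (Set.range fun v : ℝ => k * w * (1 - v) ^ 2 + (m - k) * w * (1 + v) ^ 2)

/-- Gini impurity of a set of `m` examples with `k` positives. -/
noncomputable def giniImpurity (m k : ℝ) : ℝ := 2 * (k / m) * (1 - k / m)

lemma quadMinRisk_eq (w m k : ℝ) (hw : 0 < w) (hm : 0 < m) :
    quadMinRisk w m k = 4 * w * k * (m - k) / m := by
  have hm' : m ≠ 0 := ne_of_gt hm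
  have hleast : IsLeast (Set.range fun v : ℝ =>
      k * w * (1 - v) ^ 2 + (m - k) * w * (1 + v) ^ 2) (4 * w * k * (m - k) / m) := by
    constructor
    · refine ⟨(2 * k - m) / m, ?_⟩
      field_simp
      ring
    · rintro x ⟨v, rfl⟩
      have key : k * w * (1 - v) ^ 2 + (m - k) * w * (1 + v) ^ 2
          - 4 * w * k * (m - k) / m = w * (m * v + (m - 2 * k)) ^ 2 / m := by
        field_simp
        ring
      have h2 : 0 ≤ w * (m * v + (m - 2 * k)) ^ 2 / m := by positivity
      linarith [key ▸ h2]
  exact hleast.csInf_eq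

/-- Theorem 1(a), consequence: the quadratic-loss risk reduction of a split equals
`2 n w` times the Gini impurity reduction. -/
theorem quad_risk_reduction_eq_gini_impurity_reduction
    (w : ℝ) (hw : 0 < w) (n₁ n₂ p₁ p₂ : ℕ) (hn₁ : 0 < n₁) (hn₂ : 0 < n₂)
    (hp₁ : p₁ ≤ n₁) (hp₂ : p₂ ≤ n₂) :
    quadMinRisk w ((n₁ : ℝ) + n₂) ((p₁ : ℝ) + p₂)
        - quadMinRisk w (n₁ : ℝ) (p₁ : ℝ) - quadMinRisk w (n₂ : ℝ) (p₂ : ℝ)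
      = 2 * ((n₁ : ℝ) + n₂) * w *
        (giniImpurity ((n₁ : ℝ) + n₂) ((p₁ : ℝ) + p₂)
          - ((n₁ : ℝ) / ((n₁ : ℝ) + n₂)) * giniImpurity (n₁ : ℝ) (p₁ : ℝ)
          - ((n₂ : ℝ) / ((n₁ : ℝ) + n₂)) * giniImpurity (n₂ : ℝ) (p₂ : ℝ)) := by
  have h1 : (0 : ℝ) < n₁ := by exact_mod_cast hn₁
  have h2 : (0 : ℝ) < n₂ := by exact_mod_cast hn₂
  have hn : (0 : ℝ) < (n₁ : ℝ) + n₂ := by linarith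
  rw [quadMinRisk_eq w _ _ hw hn, quadMinRisk_eq w _ _ hw h1, quadMinRisk_eq w _ _ hw h2]
  unfold giniImpurity
  field_simp
  ring
end

section
/- Let w > 0 be a real number, let n₁, n₂ be positive integers and p₁, p₂ integers with 0 < p₁ < n₁ and 0 < p₂ < n₂; set n = n₁ + n₂ and p = p₁ + p₂. Define M(m,k) = min over v ∈ ℝ of [k·w·ln(1 + exp(−v)) + (m−k)·w·ln(1 + exp(v))] for integers 0 < k < m, and define the entropy impurity H(m,k) = −(k/m)·ln(k/m) − (1 − k/m)·ln(1 − k/m). Then M(n,p) − M(n₁,p₁) − M(n₂,p₂) = n·w·( H(n,p) − (n₁/n)·H(n₁,p₁) − (n₂/n)·H(n₂,p₂) ). (Theorem 1(b) consequence: the logistic-loss risk reduction of a split equals |S|w times the entropy impurity reduction.) -/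
/-
Writing `σ` for the logistic sigmoid, `ln (1 + e^{-v}) = -ln σ(v)` and `ln (1 + e^v) = -ln (1 - σ(v))`,
so the weighted logistic risk of the constant prediction `v` on `m` examples with `k` positives is
`m w` times the binary cross-entropy of `q = k / m` against `σ(v)`. By Gibbs' inequality this is at
least `m w H(q)`, with equality at `σ(v) = q`, which is reachable because `σ` maps onto `(0, 1)`.
Hence `M(m, k) = m w H(m, k)`, and the identity for a split is algebra.
-/

/-- Minimum partial empirical risk of a constant prediction under the logistic loss,
on a set of `m` examples with `k` positives, each of weight `w`. -/
noncomputable def logisticMinRisk (w m k : ℝ) : ℝ :=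
  sInf (Set.range fun v : ℝ =>
    k * w * Real.log (1 + Real.exp (-v)) + (m - k) * w * Real.log (1 + Real.exp v))

/-- Entropy impurity of a set of `m` examples with `k` positives. -/
noncomputable def entropyImpurity (m k : ℝ) : ℝ :=
  -(k / m) * Real.log (k / m) - (1 - k / m) * Real.log (1 - k / m)

open Real

namespace Real

noncomputable def binCrossEntropy (q r : ℝ) : ℝ :=
  -q * log r - (1 - q) * log (1 - r)

lemma binCrossEntropy_self (q : ℝ) : binCrossEntropy q q = binEntropy q := by
  simp only [binCrossEntropy, binEntropy, log_inv]
  ring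

lemma sub_le_mul_log_sub_mul_log {a b : ℝ} (ha : 0 ≤ a) (hb : 0 < b) :
    a - b ≤ a * log a - a * log b := by
  rcases ha.eq_or_lt with rfl | ha
  · simpa using hb.le
  have hlog : log b - log a ≤ b / a - 1 := by
    rw [← log_div hb.ne' ha.ne']
    exact log_le_sub_one_of_pos (div_pos hb ha)
  have := mul_le_mul_of_nonneg_left hlog ha.le
  rw [mul_sub, mul_sub, mul_div_cancel₀ _ ha.ne'] at this
  linarith

lemma binEntropy_le_binCrossEntropy {q r : ℝ} (hq₀ : 0 ≤ q) (hq₁ : q ≤ 1) (hr₀ : 0 < r)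
    (hr₁ : r < 1) : binEntropy q ≤ binCrossEntropy q r := by
  have h₁ := sub_le_mul_log_sub_mul_log hq₀ hr₀
  have h₂ := sub_le_mul_log_sub_mul_log (sub_nonneg.2 hq₁) (sub_pos.2 hr₁)
  rw [← binCrossEntropy_self, binCrossEntropy, binCrossEntropy]
  linarith

lemma log_one_add_exp_neg (v : ℝ) : log (1 + exp (-v)) = -log (sigmoid v) := by
  rw [sigmoid_def, log_inv, neg_neg]

lemma log_one_add_exp (v : ℝ) : log (1 + exp v) = -log (1 - sigmoid v) := by
  rw [← sigmoid_neg, ← log_one_add_exp_neg, neg_neg]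

end Real

lemma logistic_risk_eq_mul_binCrossEntropy {m : ℝ} (hm : m ≠ 0) (w k v : ℝ) :
    k * w * log (1 + exp (-v)) + (m - k) * w * log (1 + exp v)
      = m * w * binCrossEntropy (k / m) (sigmoid v) := by
  rw [log_one_add_exp_neg, log_one_add_exp, binCrossEntropy]
  field_simp
  ring

lemma isLeast_logistic_risk {w m k : ℝ} (hw : 0 ≤ w) (hk : 0 < k) (hkm : k < m) :
    IsLeast (Set.range fun v : ℝ =>
        k * w * log (1 + exp (-v)) + (m - k) * w * log (1 + exp v))
      (m * w * binEntropy (k / m)) := by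
  have hm : 0 < m := hk.trans hkm
  have hq : k / m ∈ Set.Ioo 0 1 := ⟨div_pos hk hm, (div_lt_one hm).2 hkm⟩
  simp only [logistic_risk_eq_mul_binCrossEntropy hm.ne']
  constructor
  · obtain ⟨v, hv⟩ : k / m ∈ Set.range sigmoid := range_sigmoid ▸ hq
    exact ⟨v, by simp only [hv, binCrossEntropy_self]⟩
  · rintro _ ⟨v, rfl⟩
    exact mul_le_mul_of_nonneg_left
      (binEntropy_le_binCrossEntropy hq.1.le hq.2.le (sigmoid_pos v) (sigmoid_lt_one v))
      (mul_nonneg hm.le hw)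

lemma entropyImpurity_eq_binEntropy (m k : ℝ) : entropyImpurity m k = binEntropy (k / m) := by
  rw [← binCrossEntropy_self]
  rfl

lemma logisticMinRisk_eq {w m k : ℝ} (hw : 0 ≤ w) (hk : 0 < k) (hkm : k < m) :
    logisticMinRisk w m k = m * w * entropyImpurity m k := by
  rw [entropyImpurity_eq_binEntropy]
  exact (isLeast_logistic_risk hw hk hkm).csInf_eq

/-- Theorem 1(b), consequence: the logistic-loss risk reduction of a split equals
`n w` times the entropy impurity reduction. -/
theorem logistic_risk_reduction_eq_entropy_impurity_reduction
    (w : ℝ) (hw : 0 < w) (n₁ n₂ p₁ p₂ : ℕ)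
    (hp₁ : 0 < p₁) (hp₁' : p₁ < n₁) (hp₂ : 0 < p₂) (hp₂' : p₂ < n₂) :
    logisticMinRisk w ((n₁ : ℝ) + n₂) ((p₁ : ℝ) + p₂)
        - logisticMinRisk w (n₁ : ℝ) (p₁ : ℝ) - logisticMinRisk w (n₂ : ℝ) (p₂ : ℝ)
      = ((n₁ : ℝ) + n₂) * w *
        (entropyImpurity ((n₁ : ℝ) + n₂) ((p₁ : ℝ) + p₂)
          - ((n₁ : ℝ) / ((n₁ : ℝ) + n₂)) * entropyImpurity (n₁ : ℝ) (p₁ : ℝ)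
          - ((n₂ : ℝ) / ((n₁ : ℝ) + n₂)) * entropyImpurity (n₂ : ℝ) (p₂ : ℝ)) := by
  have h₁ : (0 : ℝ) < p₁ := by exact_mod_cast hp₁
  have h₁' : (p₁ : ℝ) < n₁ := by exact_mod_cast hp₁'
  have h₂ : (0 : ℝ) < p₂ := by exact_mod_cast hp₂
  have h₂' : (p₂ : ℝ) < n₂ := by exact_mod_cast hp₂'
  have hn : (0 : ℝ) < n₁ + n₂ := by linarith
  rw [logisticMinRisk_eq hw.le (add_pos h₁ h₂) (add_lt_add h₁' h₂'),
    logisticMinRisk_eq hw.le h₁ h₁', logisticMinRisk_eq hw.le h₂ h₂']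
  field_simp
end

section
/- Let W_p ≥ 0 and W_n ∈ ℝ with W_p + W_n ≥ 0 and (W_p, W_n) ≠ (0, 0), and define g : ℝ → ℝ by g(v) = W_p·(1−v)² + max{0, W_n·(1+v)²}. Then g attains its minimum over ℝ, and: if W_n ≤ 0 (equivalently v* := W_p/(W_p+W_n) > 1 or W_p + W_n = 0), the minimum value is 0; if W_n > 0, the minimum value is 4·(W_p + W_n)·v*·(1 − v*) where v* = W_p/(W_p + W_n). (Proposition 2(a): closed form of the minimum nnPU partial empirical risk under the quadratic loss.) -/
/-- Proposition 2(a): the nnPU quadratic objective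
`g v = Wp*(1-v)^2 + max{0, Wn*(1+v)^2}` attains its minimum over ℝ; the minimum
value is `0` when `Wn ≤ 0`, and `4 (Wp+Wn) v* (1-v*)` with `v* = Wp/(Wp+Wn)`
when `Wn > 0`. -/
theorem nnPU_quad_min (Wp Wn : ℝ) (hWp : 0 ≤ Wp) (hsum : 0 ≤ Wp + Wn)
    (hne : ¬(Wp = 0 ∧ Wn = 0)) :
    ∃ v : ℝ,
      (∀ u : ℝ, Wp * (1 - v) ^ 2 + max 0 (Wn * (1 + v) ^ 2) ≤
          Wp * (1 - u) ^ 2 + max 0 (Wn * (1 + u) ^ 2)) ∧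
      (Wn ≤ 0 → Wp * (1 - v) ^ 2 + max 0 (Wn * (1 + v) ^ 2) = 0) ∧
      (0 < Wn → Wp * (1 - v) ^ 2 + max 0 (Wn * (1 + v) ^ 2) =
        4 * (Wp + Wn) * (Wp / (Wp + Wn)) * (1 - Wp / (Wp + Wn))) := by
  by_cases hWn : Wn ≤ 0
  · refine ⟨1, ?_, fun _ => ?_, fun h => absurd h (not_lt.mpr hWn)⟩
    · intro u
      have h1 : max 0 (Wn * (1 + (1:ℝ)) ^ 2) = 0 :=
        max_eq_left (by nlinarith)
      have h2 : (0:ℝ) ≤ max 0 (Wn * (1 + u) ^ 2) := le_max_left _ _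
      nlinarith [sq_nonneg (1 - u)]
    · have h1 : max 0 (Wn * (1 + (1:ℝ)) ^ 2) = 0 :=
        max_eq_left (by nlinarith)
      rw [h1]; ring
  · push_neg at hWn
    have hS : 0 < Wp + Wn := by linarith
    refine ⟨(Wp - Wn) / (Wp + Wn), ?_, fun h => absurd hWn (not_lt.mpr h), fun _ => ?_⟩
    · intro u
      have hm : ∀ w : ℝ, max 0 (Wn * (1 + w) ^ 2) = Wn * (1 + w) ^ 2 := fun w =>
        max_eq_right (by positivity)
      rw [hm, hm]
      have h1 : 1 - (Wp - Wn) / (Wp + Wn) = 2 * Wn / (Wp + Wn) := by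
        field_simp; ring
      have h2 : 1 + (Wp - Wn) / (Wp + Wn) = 2 * Wp / (Wp + Wn) := by
        field_simp; ring
      rw [h1, h2]
      have key : Wp * (2 * Wn / (Wp + Wn)) ^ 2 + Wn * (2 * Wp / (Wp + Wn)) ^ 2
          = 4 * Wp * Wn / (Wp + Wn) := by field_simp; ring
      rw [key, div_le_iff₀ hS]
      nlinarith [sq_nonneg (Wp * (1 - u) - Wn * (1 + u))]
    · have hm : max 0 (Wn * (1 + (Wp - Wn) / (Wp + Wn)) ^ 2)
          = Wn * (1 + (Wp - Wn) / (Wp + Wn)) ^ 2 := max_eq_right (by positivity)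
      rw [hm]
      field_simp
      ring
end

section
/- Let W_p ≥ 0 and W_n ∈ ℝ with W_p + W_n ≥ 0 and (W_p, W_n) ≠ (0, 0), and define g : ℝ → ℝ by g(v) = W_p·(1−v)² + max{0, W_n·(1+v)²}. Then g attains its minimum over ℝ at the point v = (W_p − max{0, W_n})/(W_p + max{0, W_n}); in particular the minimizer is 1 when W_n ≤ 0 and is 2v* − 1 with v* = W_p/(W_p + W_n) when W_n > 0. (Minimizer in Proposition 2(a): the optimal constant prediction for the nnPU risk estimator under the quadratic loss.) -/
/-!
Since `(1 + v)² ≥ 0`, the clipped term `max 0 (Wn (1 + v)²)` equals `(max 0 Wn) (1 + v)²`, so the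
objective is the weighted square loss `a (1 - v)² + b (1 + v)²` with `a = Wp`, `b = max 0 Wn`.
For `a + b > 0` this equals `(a + b) (v - (a - b)/(a + b))²` plus a constant.
-/

theorem weighted_sq_le_at_weighted_mean {a b : ℝ} (hab : 0 < a + b) (u : ℝ) :
    a * (1 - (a - b) / (a + b)) ^ 2 + b * (1 + (a - b) / (a + b)) ^ 2 ≤
      a * (1 - u) ^ 2 + b * (1 + u) ^ 2 := by
  have hv : (a - b) / (a + b) * (a + b) = a - b := div_mul_cancel₀ _ hab.ne'
  generalize (a - b) / (a + b) = v at hv ⊢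
  have hgap : a * (1 - u) ^ 2 + b * (1 + u) ^ 2 - (a * (1 - v) ^ 2 + b * (1 + v) ^ 2)
      = (a + b) * (u - v) ^ 2 := by
    linear_combination 2 * (u - v) * hv
  linarith [mul_nonneg hab.le (sq_nonneg (u - v))]

theorem max_zero_mul_of_nonneg {c x : ℝ} (hx : 0 ≤ x) : max 0 (c * x) = max 0 c * x := by
  rw [max_mul_of_nonneg _ _ hx, zero_mul]

/-- Minimizer in Proposition 2(a): the nnPU quadratic objective
`g v = Wp*(1-v)^2 + max{0, Wn*(1+v)^2}` attains its minimum at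
`v = (Wp - max 0 Wn)/(Wp + max 0 Wn)`; in particular the minimizer is `1` when
`Wn ≤ 0` and `2v* - 1` with `v* = Wp/(Wp+Wn)` when `Wn > 0`. -/
theorem nnPU_quad_minimizer (Wp Wn : ℝ) (hWp : 0 ≤ Wp) (hsum : 0 ≤ Wp + Wn)
    (hne : ¬(Wp = 0 ∧ Wn = 0)) :
    (∀ u : ℝ,
        Wp * (1 - (Wp - max 0 Wn) / (Wp + max 0 Wn)) ^ 2
            + max 0 (Wn * (1 + (Wp - max 0 Wn) / (Wp + max 0 Wn)) ^ 2) ≤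
          Wp * (1 - u) ^ 2 + max 0 (Wn * (1 + u) ^ 2)) ∧
    (Wn ≤ 0 → (Wp - max 0 Wn) / (Wp + max 0 Wn) = 1) ∧
    (0 < Wn → (Wp - max 0 Wn) / (Wp + max 0 Wn) = 2 * (Wp / (Wp + Wn)) - 1) := by
  have hpos : 0 < Wp + max 0 Wn := by
    rcases le_or_gt Wn 0 with hWn | hWn
    · rw [max_eq_left hWn, add_zero]
      exact hWp.lt_of_ne fun h => hne ⟨h.symm, by linarith⟩
    · rw [max_eq_right hWn.le]
      linarith
  refine ⟨fun u => ?_, fun hWn => ?_, fun hWn => ?_⟩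
  · simp only [max_zero_mul_of_nonneg (sq_nonneg _)]
    exact weighted_sq_le_at_weighted_mean hpos u
  · rw [max_eq_left hWn, add_zero] at hpos ⊢
    rw [sub_zero, div_self hpos.ne']
  · rw [max_eq_right hWn.le]
    field_simp
    ring
end

section
/- Let a, b be strictly positive real numbers. Then the function s : ℝ → ℝ given by s(v) = a·4/(1 + exp(v))² + b·4/(1 + exp(−v))² attains its minimum over ℝ at v = ln(a/b), and the minimum value equals 4ab/(a+b); in particular, this minimum value coincides with the minimum over ℝ of the quadratic-loss objective v ↦ a·(1−v)² + b·(1+v)². (Proposition 3: the minimum partial empirical risk R̂*(S) is the same for the quadratic loss and the savage loss.) -/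
/-!
Both objectives are instances of the weighted inequality
`a b / (a + b) * (x + y)² ≤ a x² + b y²`, i.e. `(a + b)(a x² + b y²) - a b (x + y)² = (a x - b y)²`,
with equality exactly when `a x = b y`. For the quadratic loss take `x = 1 - v`, `y = 1 + v`, so
`x + y = 2`. For the savage loss put `t = exp v`: then `exp (-v) = t⁻¹` and the objective is
`4 (a + b t²) / (1 + t)²`, which is the case `x = 1`, `y = t` divided by `(1 + t)² / 4`.
The equality conditions give the minimisers `v = (a - b) / (a + b)` and `t = a / b`.
-/

open Real

section WeightedSquares

variable {a b : ℝ}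

theorem mul_div_add_mul_sq_le (ha : 0 ≤ a) (hb : 0 ≤ b) (x y : ℝ) :
    a * b / (a + b) * (x + y) ^ 2 ≤ a * x ^ 2 + b * y ^ 2 := by
  rcases (add_nonneg ha hb).eq_or_lt with hab | hab
  · obtain ⟨rfl, rfl⟩ : a = 0 ∧ b = 0 := ⟨by linarith, by linarith⟩
    simp
  · rw [div_mul_eq_mul_div, div_le_iff₀ hab]
    nlinarith [sq_nonneg (a * x - b * y)]

theorem mul_sq_add_mul_sq_eq_of_mul_eq (hab : a + b ≠ 0) {x y : ℝ} (h : a * x = b * y) :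
    a * x ^ 2 + b * y ^ 2 = a * b / (a + b) * (x + y) ^ 2 := by
  field_simp
  linear_combination (a * x - b * y) * h

end WeightedSquares

noncomputable def savageRisk (a b v : ℝ) : ℝ :=
  a * 4 / (1 + exp v) ^ 2 + b * 4 / (1 + exp (-v)) ^ 2

def quadRisk (a b v : ℝ) : ℝ :=
  a * (1 - v) ^ 2 + b * (1 + v) ^ 2

theorem savageRisk_eq (a b v : ℝ) :
    savageRisk a b v = 4 / (1 + exp v) ^ 2 * (a * 1 ^ 2 + b * exp v ^ 2) := by
  rw [savageRisk, exp_neg]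
  field_simp
  ring

section Risks

variable {a b : ℝ}

theorem le_savageRisk (ha : 0 ≤ a) (hb : 0 ≤ b) (v : ℝ) :
    4 * a * b / (a + b) ≤ savageRisk a b v := by
  calc 4 * a * b / (a + b)
      = 4 / (1 + exp v) ^ 2 * (a * b / (a + b) * (1 + exp v) ^ 2) := by field_simp
    _ ≤ 4 / (1 + exp v) ^ 2 * (a * 1 ^ 2 + b * exp v ^ 2) := by
        gcongr
        exact mul_div_add_mul_sq_le ha hb 1 (exp v)
    _ = savageRisk a b v := (savageRisk_eq a b v).symm

theorem savageRisk_log_div (ha : 0 < a) (hb : 0 < b) :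
    savageRisk a b (log (a / b)) = 4 * a * b / (a + b) := by
  have hdiv : 0 < a / b := div_pos ha hb
  rw [savageRisk_eq, exp_log hdiv,
    mul_sq_add_mul_sq_eq_of_mul_eq (by positivity) (by field_simp : a * 1 = b * (a / b))]
  field_simp

theorem le_quadRisk (ha : 0 ≤ a) (hb : 0 ≤ b) (v : ℝ) :
    4 * a * b / (a + b) ≤ quadRisk a b v := by
  have := mul_div_add_mul_sq_le ha hb (1 - v) (1 + v)
  rw [quadRisk]
  convert this using 1
  ring

theorem quadRisk_sub_div_add (hab : a + b ≠ 0) :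
    quadRisk a b ((a - b) / (a + b)) = 4 * a * b / (a + b) := by
  rw [quadRisk, mul_sq_add_mul_sq_eq_of_mul_eq hab (by field_simp; ring)]
  field_simp
  ring

end Risks

/-- Proposition 3: the savage-loss objective `s v = a*4/(1+exp v)^2 + b*4/(1+exp(-v))^2`
attains its minimum at `v = ln(a/b)`, with minimum value `4ab/(a+b)`; in particular
this coincides with the minimum over ℝ of the quadratic-loss objective
`v ↦ a*(1-v)^2 + b*(1+v)^2`. -/
theorem savage_loss_min_eq_quad_min (a b : ℝ) (ha : 0 < a) (hb : 0 < b) :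
    (∀ u : ℝ,
        a * 4 / (1 + Real.exp (Real.log (a / b))) ^ 2
            + b * 4 / (1 + Real.exp (-Real.log (a / b))) ^ 2 ≤
          a * 4 / (1 + Real.exp u) ^ 2 + b * 4 / (1 + Real.exp (-u)) ^ 2) ∧
    a * 4 / (1 + Real.exp (Real.log (a / b))) ^ 2
        + b * 4 / (1 + Real.exp (-Real.log (a / b))) ^ 2 = 4 * a * b / (a + b) ∧
    ∃ v₀ : ℝ, (∀ u : ℝ, a * (1 - v₀) ^ 2 + b * (1 + v₀) ^ 2 ≤
          a * (1 - u) ^ 2 + b * (1 + u) ^ 2) ∧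
      a * (1 - v₀) ^ 2 + b * (1 + v₀) ^ 2 = 4 * a * b / (a + b) := by
  have hsavage := savageRisk_log_div ha hb
  have hquad := quadRisk_sub_div_add (a := a) (b := b) (by positivity)
  exact ⟨fun u => hsavage.trans_le (le_savageRisk ha.le hb.le u), hsavage,
    (a - b) / (a + b), fun u => hquad.trans_le (le_quadRisk ha.le hb.le u), hquad⟩
end

section
/- Let a, b be real numbers with 0 ≤ a < b, and let W_p ≥ 0 and W_n ∈ ℝ. Then W_p·a + max{0, W_n·b} < W_p·b + max{0, W_n·a} if and only if max{0, W_n} < W_p. (Proposition 4, nnPU case: for any loss function ℓ with ℓ(y,y) = a and ℓ(−y,y) = b for both labels y, where 0 ≤ a < b — which includes the quadratic, logistic, savage and sigmoid losses — the constant prediction +1 has strictly smaller nnPU partial empirical risk than the constant prediction −1 if and only if max{0, W_n} < W_p.) -/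
/-- Proposition 4, nnPU case: for a loss taking value `a` on correct and `b` on
incorrect predictions with `0 ≤ a < b`, the constant prediction `+1` has strictly
smaller nnPU partial empirical risk than `-1` iff `max{0, Wn} < Wp`. -/
theorem nnPU_optimal_sign_prediction (a b Wp Wn : ℝ) (ha : 0 ≤ a) (hab : a < b)
    (hWp : 0 ≤ Wp) :
    Wp * a + max 0 (Wn * b) < Wp * b + max 0 (Wn * a) ↔ max 0 Wn < Wp := by
  have hb : 0 < b := lt_of_le_of_lt ha hab
  rcases le_or_gt 0 Wn with h | h
  · rw [max_eq_right (mul_nonneg h hb.le), max_eq_right (mul_nonneg h ha),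
      max_eq_right h]
    constructor
    · intro hlt; nlinarith
    · intro hlt; nlinarith
  · rw [max_eq_left (by nlinarith : Wn * b ≤ 0), max_eq_left (by nlinarith : Wn * a ≤ 0),
      max_eq_left h.le]
    constructor
    · intro hlt; nlinarith
    · intro hlt; nlinarith
end
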